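/- arXiv:1704.02924 — 6 statements merged into one kernel-verified Lean document; each statement's English description precedes it below -/
import Mathlib

section
/- For every n ≥ 1, the solution of the non-commutative recurrence satisfies x_n = Σ_{S} W^n_S x_0, where the sum runs over all sparse subsets S of {1,…,n−1}; equivalently, x_n = Σ_{ℓ=0}^{⌊n/2⌋} Σ_{1 ≤ i₁, i₁+1 < i₂, …, i_{ℓ−1}+1 < i_ℓ ≤ n−1} W^n_{{i₁,…,i_ℓ}} x_0. -/
/-- The collection of sparse subsets of `{1, …, n-1}`: subsets `S ⊆ {1, …, n-1}` such that
`i ∈ S` implies `i + 1 ∉ S`. -/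
def sparseSets (n : ℕ) : Finset (Finset ℕ) :=
  (Finset.Icc 1 (n - 1)).powerset.filter fun S => ∀ i ∈ S, i + 1 ∉ S

/-- The operator `W^n_S`: the composition of the factors associated to the positions
`n, n-1, …, 1` taken in decreasing order, in which for each `i ∈ S` the pair of consecutive
positions `i+1` and `i` together contributes a single factor `B`, while every position `j`
with `j ∉ S` and `j - 1 ∉ S` contributes a factor `A`; by convention `W^0_∅` is the
identity. -/
def Wop {K X : Type*} [Field K] [AddCommGroup X] [Module K X]
    (A B : Module.End K X) : ℕ → Finset ℕ → Module.End K X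
  | 0, _ => 1
  | 1, _ => A
  | n + 2, S => if n + 1 ∈ S then B * Wop A B n S else A * Wop A B (n + 1) S

/-! Split the sparse subsets of `{1, …, n + 1}` according to whether they contain `n + 1`.
Those that do not are the sparse subsets of `{1, …, n}`, and their top factor is `A`; those
that do are `insert (n + 1) S` with `S` a sparse subset of `{1, …, n - 1}`, and their top
factor is `B`.
Hence the operators `∑_S W^n_S` satisfy the recurrence of `x` with the same initial values. -/

open Finset

lemma mem_sparseSets {n : ℕ} {S : Finset ℕ} :
    S ∈ sparseSets n ↔ S ⊆ Icc 1 (n - 1) ∧ ∀ i ∈ S, i + 1 ∉ S := by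
  simp [sparseSets]

lemma notMem_of_mem_sparseSets {n m : ℕ} {S : Finset ℕ} (hS : S ∈ sparseSets n)
    (hm : n ≤ m) : m ∉ S := fun h => by
  have := (mem_sparseSets.1 hS).1 h
  simp only [mem_Icc] at this
  omega

lemma sparseSets_of_le_one {n : ℕ} (hn : n ≤ 1) : sparseSets n = {∅} := by
  ext S
  simp only [mem_sparseSets, Icc_eq_empty_of_lt (show n - 1 < 1 by omega), subset_empty,
    mem_singleton, and_iff_left_iff_imp]
  rintro rfl
  simp

lemma filter_notMem_sparseSets_add_two (n : ℕ) :
    (sparseSets (n + 2)).filter (n + 1 ∉ ·) = sparseSets (n + 1) := by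
  ext S
  simp only [mem_filter, mem_sparseSets, subset_iff, mem_Icc]
  constructor
  · rintro ⟨⟨hsub, hsp⟩, hn⟩
    exact ⟨fun i hi => by have := hsub hi; grind, hsp⟩
  · rintro ⟨hsub, hsp⟩
    exact ⟨⟨fun i hi => by have := hsub hi; omega, hsp⟩, fun h => by have := hsub h; omega⟩

lemma filter_mem_sparseSets_add_two (n : ℕ) :
    (sparseSets (n + 2)).filter (n + 1 ∈ ·) = (sparseSets n).image (insert (n + 1)) := by
  ext S
  simp only [mem_filter, mem_image, mem_sparseSets, subset_iff, mem_Icc]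
  constructor
  · rintro ⟨⟨hsub, hsp⟩, hn⟩
    refine ⟨S.erase (n + 1), ⟨fun i hi => ?_, fun i hi h => ?_⟩, insert_erase hn⟩
    · have := hsub (mem_of_mem_erase hi)
      have : i ≠ n := by rintro rfl; exact hsp _ (mem_of_mem_erase hi) hn
      grind
    · exact hsp i (mem_of_mem_erase hi) (mem_of_mem_erase h)
  · rintro ⟨T, ⟨hsub, hsp⟩, rfl⟩
    refine ⟨⟨fun i hi => ?_, fun i hi h => ?_⟩, mem_insert_self _ _⟩
    · rcases mem_insert.1 hi with rfl | hi
      · omega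
      · have := hsub hi; omega
    · rcases mem_insert.1 hi with rfl | hi <;> rcases mem_insert.1 h with h | h
      · omega
      · have := hsub h; omega
      · have := hsub hi; omega
      · exact hsp i hi h

section Wop

variable {K X : Type*} [Field K] [AddCommGroup X] [Module K X] (A B : Module.End K X)

lemma Wop_insert_of_le {n m : ℕ} (S : Finset ℕ) (h : n ≤ m) :
    Wop A B n (insert m S) = Wop A B n S := by
  induction n, S using Wop.induct generalizing m with
  | case1 | case2 => rfl
  | case3 n S hn ih | case4 n S hn ih =>
    simp [Wop, hn, show n + 1 ≠ m by omega, ih (m := m) (by omega)]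

lemma sum_sparseSets_Wop_add_two (n : ℕ) :
    ∑ S ∈ sparseSets (n + 2), Wop A B (n + 2) S =
      A * ∑ S ∈ sparseSets (n + 1), Wop A B (n + 1) S +
        B * ∑ S ∈ sparseSets n, Wop A B n S := by
  rw [← sum_filter_not_add_sum_filter _ (n + 1 ∈ ·), filter_notMem_sparseSets_add_two,
    filter_mem_sparseSets_add_two, sum_image, mul_sum, mul_sum]
  · congr 1
    · refine sum_congr rfl fun S hS => ?_
      simp [Wop, notMem_of_mem_sparseSets hS le_rfl]
    · refine sum_congr rfl fun S _ => ?_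
      simp [Wop, Wop_insert_of_le A B S (Nat.le_succ n)]
  · intro S hS T hT h
    simpa [erase_insert (notMem_of_mem_sparseSets hS (Nat.le_succ n)),
      erase_insert (notMem_of_mem_sparseSets hT (Nat.le_succ n))]
      using congr_arg (erase · (n + 1)) h

end Wop

/-- For every `n ≥ 1`, the solution of the non-commutative recurrence
`x n = A (x (n-1)) + B (x (n-2))` with initial conditions `x 0` and `x 1 = A (x 0)`
satisfies `x n = ∑_{S sparse ⊆ {1,…,n-1}} W^n_S (x 0)`. -/
theorem solution_as_sum_over_sparse_subsets {K X : Type*} [Field K] [AddCommGroup X]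
    [Module K X] (A B : Module.End K X) (x : ℕ → X)
    (hrec : ∀ n, 2 ≤ n → x n = A (x (n - 1)) + B (x (n - 2)))
    (h1 : x 1 = A (x 0)) :
    ∀ n, 1 ≤ n → x n = ∑ S ∈ sparseSets n, Wop A B n S (x 0) := by
  suffices h : ∀ n, x n = (∑ S ∈ sparseSets n, Wop A B n S) (x 0) from
    fun n _ => (h n).trans (LinearMap.sum_apply _ _ _)
  intro n
  induction n using Nat.twoStepInduction with
  | zero => simp [sparseSets_of_le_one, Wop]
  | one => simpa [sparseSets_of_le_one, Wop] using h1
  | more n ih₀ ih₁ =>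
    rw [hrec (n + 2) le_add_self, sum_sparseSets_Wop_add_two, Nat.add_sub_cancel, ih₀,
      show n + 2 - 1 = n + 1 from rfl, ih₁]
    rfl
end

section
/- Let n ≥ 1 and let S = {i₁ < i₂ < ⋯ < i_ℓ} be a sparse subset of {1,…,n−1}. Then δ_{i₁}(δ_{i₂}(⋯ δ_{i_ℓ}(P_n) ⋯)) = (∏_{k=1}^{ℓ} b_{i_k}) · ∏_{j} a_j, where the last product runs over all j ∈ {1,…,n} with j ∉ S and j−1 ∉ S. In other words, applying the operators δ_i for i ∈ S to the monomial a_n a_{n−1} ⋯ a_1 replaces, for each i ∈ S, the adjacent pair of factors a_{i+1} a_i by the single factor b_i. -/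
open MvPolynomial

/-- The monomial `P_n = a_n a_{n-1} ⋯ a_1` in the polynomial ring over `R` in the two
families of indeterminates `a_i = X (Sum.inl i)` and `b_i = X (Sum.inr i)`
(`b_i` plays the role of the symbol `b_{i+1,i}`); `P_0 = 1`. -/
noncomputable def Pmono (R : Type*) [CommRing R] (n : ℕ) : MvPolynomial (ℕ ⊕ ℕ) R :=
  ∏ j ∈ Finset.Icc 1 n, X (Sum.inl j)

/-- The operator `δ_i p = b_i • ∂_{a_{i+1}} ∂_{a_i} p`: multiplication by the variable
`b_i = X (Sum.inr i)` composed with the formal partial derivatives with respect to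
`a_{i+1}` and `a_i`. -/
noncomputable def deltaOp {R : Type*} [CommRing R] (i : ℕ)
    (p : MvPolynomial (ℕ ⊕ ℕ) R) : MvPolynomial (ℕ ⊕ ℕ) R :=
  X (Sum.inr i) * pderiv (Sum.inl (i + 1)) (pderiv (Sum.inl i) p)

/-!
On a squarefree monomial containing `a_i` and `a_{i+1}`, the operator `δ_i` simply replaces
`a_{i+1} a_i` by `b_i`. The operators are applied from the largest element of `S` down to the
smallest, so when `δ_i` is applied the only earlier operator that could have consumed one of
`a_i`, `a_{i+1}` is `δ_{i+1}`, which sparseness excludes.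
-/

namespace MvPolynomial

variable {R σ ι : Type*} [CommSemiring R]

theorem pderiv_prod_X_eq_zero {v : σ} {f : ι → σ} {t : Finset ι}
    (h : ∀ j ∈ t, f j ≠ v) :
    pderiv v (∏ j ∈ t, X (f j) : MvPolynomial σ R) = 0 :=
  Finset.prod_induction _ (fun p => pderiv v p = 0)
    (fun p q hp hq => by rw [Derivation.leibniz, hp, hq, smul_zero, smul_zero, add_zero])
    (Derivation.map_one_eq_zero _) (fun j hj => pderiv_X_of_ne (h j hj))

theorem pderiv_prod_X_of_mem [DecidableEq ι] {f : ι → σ} (hf : f.Injective) {t : Finset ι}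
    {k : ι} (hk : k ∈ t) :
    pderiv (f k) (∏ j ∈ t, X (f j) : MvPolynomial σ R) = ∏ j ∈ t.erase k, X (f j) := by
  rw [← Finset.mul_prod_erase t _ hk, Derivation.leibniz,
    pderiv_prod_X_eq_zero fun j hj => hf.ne (Finset.ne_of_mem_erase hj), pderiv_X_self,
    smul_zero, zero_add, smul_eq_mul, mul_one]

end MvPolynomial

/-- The indices `j ∈ T` lying in none of the pairs `{i, i + 1}` with `i ∈ S`. -/
def uncovered (T S : Finset ℕ) : Finset ℕ :=
  T.filter fun j => j ∉ S ∧ j - 1 ∉ S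

theorem uncovered_insert (T S : Finset ℕ) (i : ℕ) :
    uncovered T (insert i S) = ((uncovered T S).erase i).erase (i + 1) := by
  ext j
  simp only [uncovered, Finset.mem_erase, Finset.mem_filter, Finset.mem_insert, not_or]
  have pred_eq_iff : j ≠ i → (j - 1 = i ↔ j = i + 1) := by omega
  tauto

section deltaOp

variable {R : Type*} [CommRing R]

theorem deltaOp_prod_X_mul_prod_X {i : ℕ} {A B : Finset ℕ} (hi : i ∈ A) (hi' : i + 1 ∈ A)
    (hiB : i ∉ B) :
    deltaOp i
        ((∏ j ∈ B, X (Sum.inr j)) * ∏ j ∈ A, X (Sum.inl j) : MvPolynomial (ℕ ⊕ ℕ) R) =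
      (∏ j ∈ insert i B, X (Sum.inr j)) *
        ∏ j ∈ (A.erase i).erase (i + 1), X (Sum.inl j) := by
  have pderiv_const_mul (k : ℕ) (p : MvPolynomial (ℕ ⊕ ℕ) R) :
      pderiv (Sum.inl k) ((∏ j ∈ B, X (Sum.inr j)) * p) =
        (∏ j ∈ B, X (Sum.inr j)) * pderiv (Sum.inl k) p := by
    rw [Derivation.leibniz, pderiv_prod_X_eq_zero fun _ _ => Sum.inr_ne_inl, smul_zero,
      add_zero, smul_eq_mul]
  rw [deltaOp, pderiv_const_mul, pderiv_const_mul, pderiv_prod_X_of_mem Sum.inl_injective hi,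
    pderiv_prod_X_of_mem Sum.inl_injective (Finset.mem_erase.mpr ⟨by omega, hi'⟩),
    Finset.prod_insert hiB, mul_assoc]

theorem foldr_deltaOp_prod_X (T S : Finset ℕ) (hST : ∀ i ∈ S, i ∈ T ∧ i + 1 ∈ T)
    (hsparse : ∀ i ∈ S, i + 1 ∉ S) :
    (S.sort (· ≤ ·)).foldr deltaOp (∏ j ∈ T, X (Sum.inl j) : MvPolynomial (ℕ ⊕ ℕ) R) =
      (∏ i ∈ S, X (Sum.inr i)) * ∏ j ∈ uncovered T S, X (Sum.inl j) := by
  induction S using Finset.induction_on_min with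
  | empty => simp [uncovered]
  | insert i S hlt ih =>
    have hiS : i ∉ S := fun h => (hlt i h).false
    rw [Finset.sort_insert _ (fun x hx => (hlt x hx).le) hiS, List.foldr_cons,
      ih (fun x hx => hST x (Finset.mem_insert_of_mem hx))
        (fun x hx h => hsparse x (Finset.mem_insert_of_mem hx) (Finset.mem_insert_of_mem h)),
      uncovered_insert]
    obtain ⟨hiT, hi'T⟩ := hST i (Finset.mem_insert_self i S)
    have hi'S : i + 1 ∉ S := fun h =>
      hsparse i (Finset.mem_insert_self i S) (Finset.mem_insert_of_mem h)
    refine deltaOp_prod_X_mul_prod_X ?_ ?_ hiS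
    · exact Finset.mem_filter.mpr ⟨hiT, hiS, fun h => by have := hlt _ h; omega⟩
    · exact Finset.mem_filter.mpr ⟨hi'T, hi'S, by simpa using hiS⟩

end deltaOp

theorem delta_sparse_eval_general {R : Type*} [CommRing R] (n : ℕ)
    (S : Finset ℕ) (hS : S ⊆ Finset.Icc 1 (n - 1)) (hsparse : ∀ i ∈ S, i + 1 ∉ S) :
    (S.sort (· ≤ ·)).foldr (fun i q => deltaOp i q) (Pmono R n) =
      (∏ i ∈ S, X (Sum.inr i)) *
        ∏ j ∈ (Finset.Icc 1 n).filter (fun j => j ∉ S ∧ j - 1 ∉ S), X (Sum.inl j) := by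
  refine foldr_deltaOp_prod_X _ S (fun i hi => ?_) hsparse
  have := Finset.mem_Icc.mp (hS hi)
  simp only [Finset.mem_Icc]
  omega

/-- For a sparse subset `S = {i₁ < ⋯ < i_ℓ} ⊆ {1,…,n-1}`, applying
`δ_{i₁}(δ_{i₂}(⋯ δ_{i_ℓ}(P_n) ⋯))` replaces, for each `i ∈ S`, the adjacent pair of factors
`a_{i+1} a_i` in the monomial `a_n ⋯ a_1` by the single factor `b_i`:
the result is `(∏_{i ∈ S} b_i) · ∏_{j ∈ {1,…,n}, j ∉ S, j-1 ∉ S} a_j`. -/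
theorem delta_sparse_eval {R : Type*} [CommRing R] (n : ℕ) (hn : 1 ≤ n)
    (S : Finset ℕ) (hS : S ⊆ Finset.Icc 1 (n - 1)) (hsparse : ∀ i ∈ S, i + 1 ∉ S) :
    (S.sort (· ≤ ·)).foldr (fun i q => deltaOp i q) (Pmono R n) =
      (∏ i ∈ S, X (Sum.inr i)) *
        ∏ j ∈ (Finset.Icc 1 n).filter (fun j => j ∉ S ∧ j - 1 ∉ S), X (Sum.inl j) :=
  delta_sparse_eval_general n S hS hsparse
end

section
/- Let n ≥ 1 and let i₁, …, i_ℓ be any finite sequence of indices in {1,…,n−1} (repetitions allowed). If there exist positions p ≠ q with |i_p − i_q| ≤ 1 (in particular if two of the indices coincide, or if two of them are consecutive integers), then δ_{i₁}(δ_{i₂}(⋯ δ_{i_ℓ}(P_n) ⋯)) = 0. -/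
/-!
Every `a_v` occurs in `P_n` with degree at most one, and neither a partial derivative nor
multiplication by some `b_i` raises the degree in any `a_v`. Hence once `δ_j` has been applied,
`a_j` and `a_{j+1}` are gone for good, and any later `δ_i` with `|i - j| ≤ 1` differentiates
with respect to one of them and returns `0`.
-/

open MvPolynomial

namespace MvPolynomial

variable {σ R : Type*} [CommSemiring R] {p : MvPolynomial σ R}

theorem add_single_mem_support_of_mem_support_pderiv {i : σ} {m : σ →₀ ℕ}
    (hm : m ∈ (pderiv i p).support) : m + Finsupp.single i 1 ∈ p.support := by
  rw [mem_support_iff, coeff_pderiv] at hm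
  exact mem_support_iff.mpr (left_ne_zero_of_mul hm)

theorem degreeOf_pderiv_le (i j : σ) : degreeOf j (pderiv i p) ≤ degreeOf j p :=
  degreeOf_le_iff.mpr fun _ hm =>
    (Nat.le_add_right _ _).trans
      (le_degreeOf_of_mem_support j (add_single_mem_support_of_mem_support_pderiv hm))

theorem degreeOf_pderiv_self_le (i : σ) : degreeOf i (pderiv i p) ≤ degreeOf i p - 1 :=
  degreeOf_le_iff.mpr fun m hm => by
    have := le_degreeOf_of_mem_support i (add_single_mem_support_of_mem_support_pderiv hm)
    simp only [Finsupp.add_apply, Finsupp.single_eq_same] at this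
    omega

theorem pderiv_eq_zero_of_degreeOf_eq_zero {i : σ} (h : degreeOf i p = 0) : pderiv i p = 0 := by
  refine support_eq_empty.mp (Finset.eq_empty_of_forall_notMem fun m hm => ?_)
  have := le_degreeOf_of_mem_support i (add_single_mem_support_of_mem_support_pderiv hm)
  simp [h] at this

end MvPolynomial

section Delta

variable {R : Type*} [CommRing R] {p : MvPolynomial (ℕ ⊕ ℕ) R}

theorem degreeOf_inl_Pmono_le_one (n v : ℕ) : degreeOf (Sum.inl v) (Pmono R n) ≤ 1 := by
  have hX (j : ℕ) : degreeOf (Sum.inl v) (X (Sum.inl j) : MvPolynomial (ℕ ⊕ ℕ) R) ≤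
      if j = v then 1 else 0 := by
    split_ifs with h
    · subst h
      simpa using degreeOf_mul_X_self (Sum.inl j) (1 : MvPolynomial (ℕ ⊕ ℕ) R)
    · exact (degreeOf_X_of_ne (by simpa [eq_comm] using h)).le
  calc degreeOf (Sum.inl v) (Pmono R n)
      ≤ ∑ j ∈ Finset.Icc 1 n, degreeOf (Sum.inl v) (X (Sum.inl j) : MvPolynomial _ R) :=
        degreeOf_prod_le _ _ _
    _ ≤ ∑ j ∈ Finset.Icc 1 n, if j = v then 1 else 0 := Finset.sum_le_sum fun j _ => hX j
    _ ≤ 1 := by rw [Finset.sum_ite_eq']; split_ifs <;> simp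

theorem deltaOp_zero (i : ℕ) : deltaOp i (0 : MvPolynomial (ℕ ⊕ ℕ) R) = 0 := by
  simp [deltaOp]

theorem degreeOf_inl_deltaOp (i v : ℕ) :
    degreeOf (Sum.inl v) (deltaOp i p) =
      degreeOf (Sum.inl v) (pderiv (Sum.inl (i + 1)) (pderiv (Sum.inl i) p)) := by
  rw [deltaOp, mul_comm, degreeOf_mul_X_of_ne _ Sum.inl_ne_inr]

theorem degreeOf_inl_deltaOp_le (i v : ℕ) :
    degreeOf (Sum.inl v) (deltaOp i p) ≤ degreeOf (Sum.inl v) p := by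
  rw [degreeOf_inl_deltaOp]
  exact (degreeOf_pderiv_le _ _).trans (degreeOf_pderiv_le _ _)

theorem degreeOf_inl_deltaOp_self (i : ℕ) (h : degreeOf (Sum.inl i) p ≤ 1) :
    degreeOf (Sum.inl i) (deltaOp i p) = 0 := by
  rw [degreeOf_inl_deltaOp]
  have := (degreeOf_pderiv_le (Sum.inl (i + 1)) _).trans
    (degreeOf_pderiv_self_le (p := p) (Sum.inl i))
  omega

theorem degreeOf_inl_succ_deltaOp_self (i : ℕ) (h : degreeOf (Sum.inl (i + 1)) p ≤ 1) :
    degreeOf (Sum.inl (i + 1)) (deltaOp i p) = 0 := by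
  rw [degreeOf_inl_deltaOp]
  have := (degreeOf_pderiv_self_le (Sum.inl (i + 1))).trans
    (Nat.sub_le_sub_right (degreeOf_pderiv_le (p := p) (Sum.inl i) (Sum.inl (i + 1))) 1)
  omega

theorem deltaOp_eq_zero_of_degreeOf_eq_zero {i j : ℕ} (hij : |(i : ℤ) - j| ≤ 1)
    (hj : degreeOf (Sum.inl j) p = 0) (hj' : degreeOf (Sum.inl (j + 1)) p = 0) :
    deltaOp i p = 0 := by
  have hcases : i = j ∨ i = j + 1 ∨ i + 1 = j := by rw [abs_le] at hij; omega
  rcases hcases with rfl | rfl | rfl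
  · simp [deltaOp, pderiv_eq_zero_of_degreeOf_eq_zero hj]
  · simp [deltaOp, pderiv_eq_zero_of_degreeOf_eq_zero hj']
  · have : degreeOf (Sum.inl (i + 1)) (pderiv (Sum.inl i) p) = 0 :=
      Nat.eq_zero_of_le_zero (hj ▸ degreeOf_pderiv_le _ _)
    simp [deltaOp, pderiv_eq_zero_of_degreeOf_eq_zero this]

theorem degreeOf_inl_foldr_deltaOp_le (l : List ℕ) (v : ℕ) :
    degreeOf (Sum.inl v) (l.foldr deltaOp p) ≤ degreeOf (Sum.inl v) p := by
  induction l with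
  | nil => exact le_rfl
  | cons i l ih => exact (degreeOf_inl_deltaOp_le i v).trans ih

theorem degreeOf_inl_foldr_deltaOp_eq_zero_of_mem (hp : ∀ v, degreeOf (Sum.inl v) p ≤ 1)
    {l : List ℕ} {j : ℕ} (hj : j ∈ l) :
    degreeOf (Sum.inl j) (l.foldr deltaOp p) = 0 ∧
      degreeOf (Sum.inl (j + 1)) (l.foldr deltaOp p) = 0 := by
  obtain ⟨s, t, rfl⟩ := List.append_of_mem hj
  have ht (v : ℕ) := (degreeOf_inl_foldr_deltaOp_le (p := p) t v).trans (hp v)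
  rw [List.foldr_append, List.foldr_cons]
  exact ⟨Nat.eq_zero_of_le_zero ((degreeOf_inl_foldr_deltaOp_le s j).trans
      (degreeOf_inl_deltaOp_self j (ht j)).le),
    Nat.eq_zero_of_le_zero ((degreeOf_inl_foldr_deltaOp_le s (j + 1)).trans
      (degreeOf_inl_succ_deltaOp_self j (ht (j + 1))).le)⟩

theorem foldr_deltaOp_eq_zero_of_not_pairwise (hp : ∀ v, degreeOf (Sum.inl v) p ≤ 1)
    {l : List ℕ} (hl : ¬ l.Pairwise fun i j : ℕ => 1 < |(i : ℤ) - j|) :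
    l.foldr deltaOp p = 0 := by
  induction l with
  | nil => exact absurd List.Pairwise.nil hl
  | cons k l ih =>
    by_cases hpair : l.Pairwise fun i j : ℕ => 1 < |(i : ℤ) - j|
    · obtain ⟨j, hj, hkj⟩ : ∃ j ∈ l, |(k : ℤ) - j| ≤ 1 := by
        simpa [List.pairwise_cons, hpair] using hl
      obtain ⟨h₀, h₁⟩ := degreeOf_inl_foldr_deltaOp_eq_zero_of_mem hp hj
      exact deltaOp_eq_zero_of_degreeOf_eq_zero hkj h₀ h₁
    · rw [List.foldr_cons, ih hpair, deltaOp_zero]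

end Delta

theorem delta_close_indices_vanish_general {R : Type*} [CommRing R] (n : ℕ)
    (l : List ℕ)
    (p q : Fin l.length) (hpq : p ≠ q)
    (hclose : |(l.get p : ℤ) - (l.get q : ℤ)| ≤ 1) :
    l.foldr (fun i r => deltaOp i r) (Pmono R n) = 0 := by
  refine foldr_deltaOp_eq_zero_of_not_pairwise (degreeOf_inl_Pmono_le_one n) fun hl => ?_
  rw [List.pairwise_iff_get] at hl
  rcases lt_or_gt_of_ne hpq with h | h
  · exact (hl p q h).not_ge hclose
  · exact (hl q p h).not_ge (abs_sub_comm (l.get p : ℤ) _ ▸ hclose)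

/-- Let `n ≥ 1` and let `i₁, …, i_ℓ` be a finite sequence of indices in `{1,…,n-1}`
(repetitions allowed).  If there exist positions `p ≠ q` with `|i_p − i_q| ≤ 1`
(in particular if two of the indices coincide, or are consecutive integers), then
`δ_{i₁}(δ_{i₂}(⋯ δ_{i_ℓ}(P_n) ⋯)) = 0`. -/
theorem delta_close_indices_vanish {R : Type*} [CommRing R] (n : ℕ) (hn : 1 ≤ n)
    (l : List ℕ) (hl : ∀ i ∈ l, i ∈ Finset.Icc 1 (n - 1))
    (p q : Fin l.length) (hpq : p ≠ q)
    (hclose : |(l.get p : ℤ) - (l.get q : ℤ)| ≤ 1) :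
    l.foldr (fun i r => deltaOp i r) (Pmono R n) = 0 :=
  delta_close_indices_vanish_general n l p q hpq hclose
end

section
/- Let R be a commutative ℚ-algebra. For m ≥ 1 set d_m := δ_1 + ⋯ + δ_m and let E_m(q) := Σ_{ℓ ≥ 0} (1/ℓ!) d_m^ℓ(q) (a finite sum when q is one of the monomials P_k, since d_m acts nilpotently on them), with the convention E_m = identity for m ≤ 0. Then for every n ≥ 2: E_{n−1}(P_n) = a_n · E_{n−2}(P_{n−1}) + b_{n−1} · E_{n−3}(P_{n−2}). -/
/-
Split `d_{n-1} = d_{n-2} + δ_{n-1}`. The two summands commute, and `δ_{n-1}` sends `P_n` to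
`b_{n-1} P_{n-2}`, which it kills; hence `E_{n-1}(P_n) = E_{n-2}(P_n) + E_{n-2}(b_{n-1} P_{n-2})`.
The variables `a_n` and `b_{n-1}` are constants for `d_{n-2}`, so they factor out of `E_{n-2}`.
Finally `δ_{n-2}` kills `P_{n-2}`, so `E_{n-2}(P_{n-2}) = E_{n-3}(P_{n-2})` by the same splitting.
-/

open MvPolynomial

/-- The operator `d_m = δ_1 + ⋯ + δ_m` (the zero operator for `m = 0`). -/
noncomputable def dm (R : Type*) [CommRing R] (m : ℕ)
    (p : MvPolynomial (ℕ ⊕ ℕ) R) : MvPolynomial (ℕ ⊕ ℕ) R :=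
  ∑ i ∈ Finset.Icc 1 m, deltaOp i p

/-- The exponential `E_m (q) = ∑_{ℓ ≥ 0} (1/ℓ!) d_m^ℓ (q)`, a finite sum when `q` is one of
the monomials `P_k` since `d_m` acts nilpotently on them; `E_0` is the identity. -/
noncomputable def Eop (R : Type*) [CommRing R] [Algebra ℚ R] (m : ℕ)
    (q : MvPolynomial (ℕ ⊕ ℕ) R) : MvPolynomial (ℕ ⊕ ℕ) R :=
  ∑ᶠ ℓ : ℕ, ((ℓ.factorial : ℚ)⁻¹) • (dm R m)^[ℓ] q

open Finset

section NilExp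

variable {R M : Type*} [Semiring R] [AddCommGroup M] [Module R M]
variable {f g : Module.End R M} {v : M} {N : ℕ}

theorem pow_apply_eq_zero_of_le (hv : (f ^ N) v = 0) {ℓ : ℕ} (h : N ≤ ℓ) : (f ^ ℓ) v = 0 := by
  rw [← Nat.sub_add_cancel h, pow_add, Module.End.mul_apply, hv, map_zero]

theorem Commute.apply_pow_apply (h : Commute g f) (k : ℕ) (w : M) :
    g ((f ^ k) w) = (f ^ k) (g w) :=
  LinearMap.congr_fun (h.pow_right k) w

theorem add_pow_succ_apply (hfg : Commute f g) (hg : g (g v) = 0) (ℓ : ℕ) :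
    ((f + g) ^ (ℓ + 1)) v = (f ^ (ℓ + 1)) v + (ℓ + 1) • (f ^ ℓ) (g v) := by
  induction ℓ with
  | zero => simp
  | succ ℓ ih =>
    rw [pow_succ', Module.End.mul_apply, ih, LinearMap.add_apply, map_add, map_add, map_nsmul,
      map_nsmul, hfg.symm.apply_pow_apply, hfg.symm.apply_pow_apply, hg, map_zero, smul_zero,
      add_zero, ← Module.End.mul_apply f, ← pow_succ', ← Module.End.mul_apply f, ← pow_succ',
      succ_nsmul _ (ℓ + 1)]
    abel

variable [Module ℚ M]

/-- `exp f` applied to `v`; the `finsum` is junk (zero) unless `f` is nilpotent on `v`. -/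
noncomputable def nilExp (f : Module.End R M) (v : M) : M :=
  ∑ᶠ ℓ : ℕ, ((ℓ.factorial : ℚ)⁻¹) • (f ^ ℓ) v

theorem nilExp_eq_sum_range (hv : (f ^ N) v = 0) :
    nilExp f v = ∑ ℓ ∈ range N, ((ℓ.factorial : ℚ)⁻¹) • (f ^ ℓ) v := by
  refine finsum_eq_sum_of_support_subset _ fun ℓ hℓ => ?_
  contrapose! hℓ
  simp only [coe_range, Set.mem_Iio, not_lt] at hℓ
  simp [pow_apply_eq_zero_of_le hv hℓ]

theorem map_nilExp (hgf : Commute g f) (hv : (f ^ N) v = 0) :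
    g (nilExp f v) = nilExp f (g v) := by
  have hgv : (f ^ N) (g v) = 0 := by rw [← hgf.apply_pow_apply, hv, map_zero]
  rw [nilExp_eq_sum_range hv, nilExp_eq_sum_range hgv, map_sum]
  simp only [map_rat_smul, hgf.apply_pow_apply]

theorem inv_factorial_succ_smul_succ_nsmul (ℓ : ℕ) (w : M) :
    (((ℓ + 1).factorial : ℚ)⁻¹) • ((ℓ + 1) • w) = ((ℓ.factorial : ℚ)⁻¹) • w := by
  rw [← Nat.cast_smul_eq_nsmul ℚ, smul_smul, Nat.factorial_succ]
  congr 1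
  push_cast
  field_simp

/-- `exp (f + g) v = exp f (exp g v)`, and `exp g v = v + g v` because `g² v = 0`. -/
theorem nilExp_add_of_apply_apply_eq_zero (hfg : Commute f g) (hg : g (g v) = 0)
    (hv : (f ^ N) v = 0) : nilExp (f + g) v = nilExp f v + nilExp f (g v) := by
  have hgv : (f ^ N) (g v) = 0 := by rw [← hfg.symm.apply_pow_apply, hv, map_zero]
  have hfgv : ((f + g) ^ (N + 1)) v = 0 := by
    rw [add_pow_succ_apply hfg hg, hgv, smul_zero, add_zero,
      pow_apply_eq_zero_of_le hv N.le_succ]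
  rw [nilExp_eq_sum_range hfgv, nilExp_eq_sum_range (pow_apply_eq_zero_of_le hv N.le_succ),
    nilExp_eq_sum_range hgv, sum_range_succ', sum_range_succ' _ N]
  simp only [add_pow_succ_apply hfg hg, smul_add, sum_add_distrib,
    inv_factorial_succ_smul_succ_nsmul]
  abel

end NilExp

section CommAlgebra

variable {R A : Type*} [CommSemiring R] [CommSemiring A] [Algebra R A]

theorem LinearMap.commute_mulLeft_mulLeft (a b : A) :
    Commute (LinearMap.mulLeft R a) (LinearMap.mulLeft R b) :=
  LinearMap.ext fun c => mul_left_comm a b c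

theorem Derivation.commute_mulLeft_of_apply_eq_zero (D : Derivation R A A) {a : A}
    (ha : D a = 0) : Commute (LinearMap.mulLeft R a) (D : Module.End R A) :=
  LinearMap.ext fun c => by simp [ha]

end CommAlgebra

namespace MvPolynomial

variable {R σ : Type*}

theorem commute_pderiv [CommRing R] (i j : σ) :
    Commute ((pderiv i : Derivation R _ _) : Module.End R (MvPolynomial σ R))
      (pderiv j : Derivation R _ _) := by
  classical
  have h : ⁅pderiv i, pderiv j⁆ = (0 : Derivation R (MvPolynomial σ R) (MvPolynomial σ R)) :=
    derivation_ext fun k => by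
      rw [Derivation.commutator_apply, pderiv_X, pderiv_X, Pi.single_apply, Pi.single_apply]
      split_ifs <;> simp
  rw [commute_iff_lie_eq, ← Derivation.commutator_coe_linear_map, h]
  rfl

theorem pderiv_pderiv_comm [CommRing R] (i j : σ) (p : MvPolynomial σ R) :
    pderiv i (pderiv j p) = pderiv j (pderiv i p) :=
  LinearMap.congr_fun (commute_pderiv i j) p

theorem totalDegree_pderiv_le [CommSemiring R] (i : σ) (p : MvPolynomial σ R) :
    (pderiv i p).totalDegree ≤ p.totalDegree - 1 := by
  refine Finset.sup_le fun m hm => ?_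
  have hmi : m + Finsupp.single i 1 ∈ p.support := by
    rw [mem_support_iff, coeff_pderiv] at hm
    exact mem_support_iff.2 (left_ne_zero_of_mul hm)
  have h := le_totalDegree hmi
  change Finsupp.degree (m + Finsupp.single i 1) ≤ _ at h
  rw [map_add, Finsupp.degree_single] at h
  change Finsupp.degree m ≤ _
  omega

end MvPolynomial

section Operators

variable {R : Type*} [CommRing R]

noncomputable def deltaLin (i : ℕ) : Module.End R (MvPolynomial (ℕ ⊕ ℕ) R) :=
  LinearMap.mulLeft R (X (Sum.inr i)) * (pderiv (Sum.inl (i + 1))).toLinearMap *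
    (pderiv (Sum.inl i)).toLinearMap

theorem deltaLin_apply (i : ℕ) (p : MvPolynomial (ℕ ⊕ ℕ) R) : deltaLin i p = deltaOp i p := rfl

noncomputable def dmLin (m : ℕ) : Module.End R (MvPolynomial (ℕ ⊕ ℕ) R) :=
  ∑ i ∈ Icc 1 m, deltaLin i

theorem dmLin_apply (m : ℕ) (p : MvPolynomial (ℕ ⊕ ℕ) R) : dmLin m p = dm R m p := by
  simp only [dmLin, dm, LinearMap.sum_apply, deltaLin_apply]

theorem dmLin_succ (m : ℕ) : (dmLin (m + 1) : Module.End R _) = dmLin m + deltaLin (m + 1) :=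
  sum_Icc_succ_top (by omega) _

theorem commute_mulLeft_X_deltaLin {v : ℕ ⊕ ℕ} {i : ℕ} (h₁ : v ≠ Sum.inl i)
    (h₂ : v ≠ Sum.inl (i + 1)) : Commute (LinearMap.mulLeft R (X v)) (deltaLin i) :=
  ((LinearMap.commute_mulLeft_mulLeft _ _).mul_right
    (Derivation.commute_mulLeft_of_apply_eq_zero _ (pderiv_X_of_ne h₂))).mul_right
    (Derivation.commute_mulLeft_of_apply_eq_zero _ (pderiv_X_of_ne h₁))

theorem commute_pderiv_inl_deltaLin (k i : ℕ) :
    Commute (pderiv (Sum.inl k) : Derivation R _ _).toLinearMap (deltaLin i) :=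
  ((Derivation.commute_mulLeft_of_apply_eq_zero _ (pderiv_X_of_ne (by simp))).symm.mul_right
    (commute_pderiv _ _)).mul_right (commute_pderiv _ _)

theorem commute_deltaLin (i j : ℕ) : Commute (deltaLin (R := R) i) (deltaLin j) :=
  ((commute_mulLeft_X_deltaLin (by simp) (by simp)).mul_left
    (commute_pderiv_inl_deltaLin _ _)).mul_left (commute_pderiv_inl_deltaLin _ _)

theorem commute_dmLin_deltaLin (m k : ℕ) : Commute (dmLin (R := R) m) (deltaLin k) :=
  Commute.sum_left _ _ _ fun i _ => commute_deltaLin i k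

theorem commute_mulLeft_X_dmLin {v : ℕ ⊕ ℕ} {m : ℕ} (hv : ∀ i ≤ m + 1, v ≠ Sum.inl i) :
    Commute (LinearMap.mulLeft R (X v)) (dmLin m) :=
  Commute.sum_right _ _ _ fun i hi => by
    rw [mem_Icc] at hi
    exact commute_mulLeft_X_deltaLin (hv i (by omega)) (hv (i + 1) (by omega))

theorem totalDegree_deltaOp_le (i : ℕ) (p : MvPolynomial (ℕ ⊕ ℕ) R) :
    (deltaOp i p).totalDegree ≤ p.totalDegree - 1 := by
  have h₁ := totalDegree_pderiv_le (Sum.inl i) p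
  have h₂ := totalDegree_pderiv_le (Sum.inl (i + 1)) (pderiv (Sum.inl i) p)
  rcases le_or_gt p.totalDegree 1 with hp | hp
  · have h₀ : (pderiv (Sum.inl i) p).totalDegree = 0 := by omega
    rw [deltaOp, totalDegree_eq_zero_iff_eq_C.1 h₀]
    simp
  · have hX : (X (Sum.inr i) : MvPolynomial (ℕ ⊕ ℕ) R).totalDegree ≤ 1 :=
      (totalDegree_monomial_le _ _).trans (by simp)
    have := totalDegree_mul (X (Sum.inr i) : MvPolynomial (ℕ ⊕ ℕ) R)
      (pderiv (Sum.inl (i + 1)) (pderiv (Sum.inl i) p))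
    rw [deltaOp]
    omega

theorem deltaOp_eq_zero_of_totalDegree_eq_zero (i : ℕ) {p : MvPolynomial (ℕ ⊕ ℕ) R}
    (h : p.totalDegree = 0) : deltaOp i p = 0 := by
  rw [totalDegree_eq_zero_iff_eq_C.1 h]
  simp [deltaOp]

theorem dmLin_pow_apply_eq_zero (m : ℕ) {N : ℕ} {p : MvPolynomial (ℕ ⊕ ℕ) R}
    (h : p.totalDegree < N) : (dmLin m ^ N) p = 0 := by
  induction N generalizing p with
  | zero => omega
  | succ N ih =>
    rw [pow_succ, Module.End.mul_apply, dmLin_apply, dm]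
    rcases eq_or_ne p.totalDegree 0 with h₀ | h₀
    · rw [sum_eq_zero fun i _ => deltaOp_eq_zero_of_totalDegree_eq_zero i h₀, map_zero]
    · exact ih ((totalDegree_finsetSum_le fun i _ => totalDegree_deltaOp_le i p).trans_lt
        (by omega))

end Operators

section Monomials

variable {R : Type*} [CommRing R]

theorem Pmono_succ (k : ℕ) : Pmono R (k + 1) = X (Sum.inl (k + 1)) * Pmono R k := by
  rw [Pmono, Pmono, prod_Icc_succ_top (by omega), mul_comm]

theorem pderiv_Pmono_of_lt {t k : ℕ} (h : k < t) : pderiv (Sum.inl t) (Pmono R k) = 0 := by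
  induction k with
  | zero => simp [Pmono]
  | succ k ih =>
    rw [Pmono_succ, pderiv_mul, pderiv_X_of_ne (Sum.inl_injective.ne (by omega)),
      ih (by omega), mul_zero, zero_mul, add_zero]

theorem pderiv_Pmono_succ (k : ℕ) : pderiv (Sum.inl (k + 1)) (Pmono R (k + 1)) = Pmono R k := by
  rw [Pmono_succ, pderiv_mul, pderiv_X_self, one_mul, pderiv_Pmono_of_lt k.lt_succ_self,
    mul_zero, add_zero]

theorem deltaOp_Pmono_self (k : ℕ) : deltaOp k (Pmono R k) = 0 := by
  rw [deltaOp, pderiv_pderiv_comm, pderiv_Pmono_of_lt k.lt_succ_self, map_zero, mul_zero]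

theorem deltaOp_succ_Pmono_add_two (k : ℕ) :
    deltaOp (k + 1) (Pmono R (k + 2)) = X (Sum.inr (k + 1)) * Pmono R k := by
  rw [deltaOp, Pmono_succ (k + 1), pderiv_mul, pderiv_X_of_ne (by simp), pderiv_Pmono_succ,
    zero_mul, zero_add, pderiv_mul, pderiv_X_self, one_mul, pderiv_Pmono_of_lt (by omega),
    mul_zero, add_zero]

theorem deltaOp_succ_X_mul_Pmono (k : ℕ) :
    deltaOp (k + 1) (X (Sum.inr (k + 1)) * Pmono R k) = 0 := by
  rw [deltaOp, pderiv_mul, pderiv_X_of_ne (by simp), pderiv_Pmono_of_lt (by omega)]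
  simp

end Monomials

section Exponential

variable {R : Type*} [CommRing R] [Algebra ℚ R]

theorem Eop_eq_nilExp (m : ℕ) (q : MvPolynomial (ℕ ⊕ ℕ) R) : Eop R m q = nilExp (dmLin m) q := by
  have h : dm R m = ⇑(dmLin m) := funext fun p => (dmLin_apply m p).symm
  simp only [Eop, nilExp, h, Module.End.pow_apply]

theorem Eop_apply_zero (m : ℕ) : Eop R m 0 = 0 := by
  simp [Eop_eq_nilExp, nilExp]

theorem Eop_succ (m : ℕ) {q : MvPolynomial (ℕ ⊕ ℕ) R}
    (hq : deltaOp (m + 1) (deltaOp (m + 1) q) = 0) :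
    Eop R (m + 1) q = Eop R m q + Eop R m (deltaOp (m + 1) q) := by
  rw [Eop_eq_nilExp, Eop_eq_nilExp, Eop_eq_nilExp, dmLin_succ, ← deltaLin_apply]
  exact nilExp_add_of_apply_apply_eq_zero (commute_dmLin_deltaLin _ _) hq
    (dmLin_pow_apply_eq_zero m q.totalDegree.lt_succ_self)

theorem Eop_X_mul {m : ℕ} {v : ℕ ⊕ ℕ} (hv : ∀ i ≤ m + 1, v ≠ Sum.inl i)
    (q : MvPolynomial (ℕ ⊕ ℕ) R) : Eop R m (X v * q) = X v * Eop R m q := by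
  rw [Eop_eq_nilExp, Eop_eq_nilExp]
  exact (map_nilExp (commute_mulLeft_X_dmLin hv)
    (dmLin_pow_apply_eq_zero m q.totalDegree.lt_succ_self)).symm

theorem Eop_Pmono_self (k : ℕ) : Eop R k (Pmono R k) = Eop R (k - 1) (Pmono R k) := by
  cases k with
  | zero => rfl
  | succ k =>
    rw [Eop_succ k (by rw [deltaOp_Pmono_self]; simp [deltaOp]), deltaOp_Pmono_self,
      Eop_apply_zero, add_zero, Nat.add_sub_cancel]

end Exponential

/-- For every `n ≥ 2`:
`E_{n-1}(P_n) = a_n · E_{n-2}(P_{n-1}) + b_{n-1} · E_{n-3}(P_{n-2})`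
(with natural subtraction, so that `E_m` is the identity for `m ≤ 0`). -/
theorem Eop_recurrence {R : Type*} [CommRing R] [Algebra ℚ R] (n : ℕ) (hn : 2 ≤ n) :
    Eop R (n - 1) (Pmono R n) =
      X (Sum.inl n) * Eop R (n - 2) (Pmono R (n - 1)) +
        X (Sum.inr (n - 1)) * Eop R (n - 3) (Pmono R (n - 2)) := by
  obtain ⟨k, rfl⟩ : ∃ k, n = k + 2 := ⟨n - 2, by omega⟩
  rw [show k + 2 - 1 = k + 1 by omega, show k + 2 - 2 = k by omega,
    show k + 2 - 3 = k - 1 by omega,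
    Eop_succ k (by rw [deltaOp_succ_Pmono_add_two, deltaOp_succ_X_mul_Pmono]),
    deltaOp_succ_Pmono_add_two, Pmono_succ (k + 1),
    Eop_X_mul (fun _ _ => Sum.inl_injective.ne (by omega)), Eop_X_mul (by simp), Eop_Pmono_self]
end

section
/- Let r ≤ m and let h : (Fin m → α) → Y be invariant under every permutation of Fin m that permutes the first m−r coordinates among themselves and fixes the last r coordinates, and also under every permutation that permutes the last r coordinates among themselves and fixes the first m−r coordinates. Then for every k : Fin m → α, (P_sym h)(k₁,…,k_m) = ((m−r)! · r! / m!) · Σ_{1 ≤ i₁ < i₂ < ⋯ < i_r ≤ m} h(k_{j₁},…,k_{j_{m−r}}, k_{i₁},…,k_{i_r}), where j₁ < ⋯ < j_{m−r} is the increasing enumeration of {1,…,m} \ {i₁,…,i_r}. -/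
/-!
Every permutation of `Fin m` factors uniquely as `arrange T * σ`, where `T` is the image of the
last `r` positions and `σ` permutes the first `m - r` and the last `r` positions among
themselves. By the two invariances of `h` the factor `σ` does not change `h (k ∘ ·)`, so the
`(m - r)! r!` permutations lying over each `T` all contribute `h (k ∘ arrange T)`.
-/

/-- Full symmetrization: `(P_sym f)(k) = (1/m!) ∑_{ρ ∈ Perm(Fin m)} f (k ∘ ρ)`. -/
noncomputable def Psym {α Y : Type*} [AddCommGroup Y] [Module ℚ Y] (m : ℕ)
    (f : (Fin m → α) → Y) : (Fin m → α) → Y :=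
  fun k => ((m.factorial : ℚ)⁻¹) • ∑ ρ : Equiv.Perm (Fin m), f (k ∘ ρ)

/-- Given an `r`-element subset `T = {i₁ < ⋯ < i_r}` of `Fin m`, the rearrangement map
sending the position `l` to the `(l+1)`-st element `j_{l+1}` of the increasing enumeration
of the complement of `T` if `l < m - r`, and to the element `i_{l-(m-r)+1}` of the
increasing enumeration of `T` otherwise. -/
def arrange {m r : ℕ} (hr : r ≤ m) (T : Finset (Fin m)) (hT : T.card = r) :
    Fin m → Fin m := fun l =>
  if hl : (l : ℕ) < m - r then
    ((Tᶜ.orderIsoOfFin (by rw [Finset.card_compl, hT, Fintype.card_fin]))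
      ⟨(l : ℕ), hl⟩ : Fin m)
  else
    ((T.orderIsoOfFin hT) ⟨(l : ℕ) - (m - r), by have := l.isLt; omega⟩ : Fin m)

open Finset Function Equiv

section Arrange

variable {m r : ℕ} (hr : r ≤ m) (T : Finset (Fin m)) (hT : T.card = r)

lemma arrange_mem_compl_of_lt {l : Fin m} (hl : (l : ℕ) < m - r) :
    arrange hr T hT l ∈ Tᶜ := by
  rw [arrange, dif_pos hl]
  exact coe_mem _

lemma arrange_mem_of_not_lt {l : Fin m} (hl : ¬(l : ℕ) < m - r) : arrange hr T hT l ∈ T := by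
  rw [arrange, dif_neg hl]
  exact coe_mem _

lemma arrange_injective : Injective (arrange hr T hT) := by
  intro a b hab
  by_cases ha : (a : ℕ) < m - r <;> by_cases hb : (b : ℕ) < m - r
  · simpa [arrange, ha, hb, Fin.ext_iff] using hab
  · exact (mem_compl.1 (hab ▸ arrange_mem_compl_of_lt hr T hT ha)
      (arrange_mem_of_not_lt hr T hT hb)).elim
  · exact (mem_compl.1 (hab ▸ arrange_mem_compl_of_lt hr T hT hb)
      (arrange_mem_of_not_lt hr T hT ha)).elim
  · simp only [arrange, ha, hb, ↓reduceDIte, coe_orderIsoOfFin_apply,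
      EmbeddingLike.apply_eq_iff_eq, Fin.ext_iff] at hab
    omega

end Arrange

noncomputable def arrangeEquiv {m r : ℕ} (hr : r ≤ m) (T : Finset (Fin m)) (hT : T.card = r) :
    Perm (Fin m) :=
  .ofBijective (arrange hr T hT) (Finite.injective_iff_bijective.mp (arrange_injective hr T hT))

namespace Equiv.Perm

section

variable {ι : Type*} {p : ι → Prop} [DecidablePred p]

lemma apply_comp_subtypeCongr {α β : Type*} (g : (ι → α) → β)
    (h₁ : ∀ π : Perm ι, (∀ a, ¬p a → π a = a) → ∀ k, g (k ∘ π) = g k)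
    (h₂ : ∀ π : Perm ι, (∀ a, p a → π a = a) → ∀ k, g (k ∘ π) = g k)
    (σ₁ : Perm {a // p a}) (σ₂ : Perm {a // ¬p a}) (k : ι → α) :
    g (k ∘ subtypeCongr σ₁ σ₂) = g k := by
  have split : subtypeCongr σ₁ σ₂ = subtypeCongr σ₁ 1 * subtypeCongr 1 σ₂ := by
    simpa using (subtypeCongrHom p).map_mul (σ₁, 1) (1, σ₂)
  rw [split, coe_mul, ← comp_assoc,
    h₂ _ (fun a ha => by simp [subtypeCongr.left_apply _ _ ha]),
    h₁ _ (fun a ha => by simp [subtypeCongr.right_apply _ _ ha])]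

end

variable {ι : Type*} [Fintype ι] [DecidableEq ι] {p : ι → Prop} [DecidablePred p]

theorem bijective_mul_subtypeCongr {n : ℕ} (hn : Fintype.card {a // ¬p a} = n)
    (e : {T : Finset ι // T.card = n} → Perm ι) (he : ∀ T a, ¬p a → e T a ∈ T.1) :
    Bijective fun x : {T : Finset ι // T.card = n} × Perm {a // p a} × Perm {a // ¬p a} =>
      e x.1 * subtypeCongr x.2.1 x.2.2 := by
  have map_eq : ∀ T (σ₁ : Perm {a // p a}) (σ₂ : Perm {a // ¬p a}),
      ({a | ¬p a} : Finset ι).map (e T * subtypeCongr σ₁ σ₂).toEmbedding = T.1 := by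
    intro T σ₁ σ₂
    refine eq_of_subset_of_card_le ?_ ?_
    · intro b hb
      simp only [mem_map, mem_filter, mem_univ, true_and] at hb
      obtain ⟨a, ha, rfl⟩ := hb
      refine he _ _ ?_
      rw [subtypeCongr.right_apply _ _ ha]
      exact (σ₂ _).2
    · rw [card_map, T.2, ← hn, Fintype.card_subtype]
  have hle : n ≤ Fintype.card ι := hn ▸ Fintype.card_subtype_le _
  have hcard : Fintype.card {a // p a} = Fintype.card ι - n := by
    have := Fintype.card_subtype_compl p
    have := Fintype.card_subtype_le p
    omega
  refine (Fintype.bijective_iff_injective_and_card _).2 ⟨?_, ?_⟩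
  · rintro ⟨T, σ₁, σ₂⟩ ⟨T', σ₁', σ₂'⟩ hx
    obtain rfl : T = T' := Subtype.ext <| by
      simpa only [map_eq] using
        congrArg (fun ρ : Perm ι => ({a | ¬p a} : Finset ι).map ρ.toEmbedding) hx
    exact Prod.ext rfl (subtypeCongrHom_injective p (mul_left_cancel hx))
  · rw [Fintype.card_prod, Fintype.card_prod, Fintype.card_perm, Fintype.card_perm,
      Fintype.card_perm, Fintype.card_finset_len, hcard, hn,
      ← Nat.choose_mul_factorial_mul_factorial hle]
    ring

theorem sum_eq_factorial_mul_sum_of_mul_subtypeCongr_eq {M : Type*} [AddCommMonoid M] {n : ℕ}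
    (hn : Fintype.card {a // ¬p a} = n)
    (e : {T : Finset ι // T.card = n} → Perm ι) (he : ∀ T a, ¬p a → e T a ∈ T.1)
    (f : Perm ι → M)
    (hf : ∀ ρ (σ₁ : Perm {a // p a}) (σ₂ : Perm {a // ¬p a}),
      f (ρ * subtypeCongr σ₁ σ₂) = f ρ) :
    ∑ ρ, f ρ = ((Fintype.card {a // p a}).factorial * n.factorial) • ∑ T, f (e T) := by
  rw [← (bijective_mul_subtypeCongr hn e he).sum_comp, Fintype.sum_prod_type]
  simp only [hf, sum_const, card_univ, Fintype.card_prod, Fintype.card_perm, hn, smul_sum]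

end Equiv.Perm

/-- If `h` is invariant under every permutation of `Fin m` fixing the last `r` coordinates
(hence permuting the first `m - r` among themselves), and under every permutation fixing
the first `m - r` coordinates, then for every `k`:
`(P_sym h)(k) = ((m-r)!·r!/m!) ∑_{T ⊆ Fin m, |T| = r} h(k_{j₁},…,k_{j_{m-r}},k_{i₁},…,k_{i_r})`,
where `i₁ < ⋯ < i_r` enumerates `T` and `j₁ < ⋯ < j_{m-r}` enumerates its complement. -/
theorem psym_as_sum_over_subsets {α Y : Type*} [AddCommGroup Y] [Module ℚ Y]
    (m r : ℕ) (hr : r ≤ m) (h : (Fin m → α) → Y)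
    (hinv1 : ∀ π : Equiv.Perm (Fin m), (∀ l : Fin m, m - r ≤ (l : ℕ) → π l = l) →
      ∀ k : Fin m → α, h (k ∘ π) = h k)
    (hinv2 : ∀ π : Equiv.Perm (Fin m), (∀ l : Fin m, (l : ℕ) < m - r → π l = l) →
      ∀ k : Fin m → α, h (k ∘ π) = h k)
    (k : Fin m → α) :
    Psym m h k = (((m - r).factorial * r.factorial : ℚ) / m.factorial) •
      ∑ T : {T : Finset (Fin m) // T.card = r}, h (k ∘ arrange hr T.1 T.2) := by
  have hcard : Fintype.card {l : Fin m // (l : ℕ) < m - r} = m - r :=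
    Fintype.card_fin_lt_of_le (Nat.sub_le m r)
  have hcard' : Fintype.card {l : Fin m // ¬(l : ℕ) < m - r} = r := by
    rw [Fintype.card_subtype_compl, hcard, Fintype.card_fin]
    omega
  rw [Psym, Perm.sum_eq_factorial_mul_sum_of_mul_subtypeCongr_eq hcard'
    (fun T => arrangeEquiv hr T.1 T.2) (fun T _ hl => arrange_mem_of_not_lt hr T.1 T.2 hl)
    (fun ρ => h (k ∘ ρ))
    (fun ρ σ₁ σ₂ => Perm.apply_comp_subtypeCongr h
      (fun π hπ => hinv1 π fun l hl => hπ l (not_lt.2 hl)) hinv2 σ₁ σ₂ (k ∘ ρ)),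
    hcard, ← Nat.cast_smul_eq_nsmul ℚ, smul_smul]
  congr 1
  push_cast
  ring
end

section
/- For every n ∈ ℕ and every a : Fin n → ℝ with a_i > 0 for all i, the following identity holds: Σ_{π ∈ Perm(Fin n)} ∏_{m=1}^{n} (a_{π(1)} + a_{π(2)} + ⋯ + a_{π(m)})^{−1} = ∏_{m=1}^{n} a_m^{−1}. -/
/-!
Read the partial sums backwards, as suffix sums `a_{π(m)} + ⋯ + a_{π(n)}`. The suffix starting at
the first position is always the total sum `S`, and the remaining suffixes are those of the
permutation of the other `n - 1` values. Grouping the permutations by `p = π(1)`, induction turns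
the left-hand side into `∑_p S⁻¹ · a_p · ∏_m a_m⁻¹ = ∏_m a_m⁻¹`.
-/

open Finset Equiv

theorem Fin.sum_Ici_rev {M : Type*} [AddCommMonoid M] {n : ℕ} (f : Fin n → M) (m : Fin n) :
    ∑ j ∈ Ici m.rev, f j.rev = ∑ j ∈ Iic m, f j := by
  rw [← Fin.finsetImage_rev_Iic, sum_image (Fin.rev_injective.injOn)]
  simp only [Fin.rev_rev]

theorem Fin.mul_prod_comp_swap_zero_succ {M : Type*} [CommMonoid M] {n : ℕ} (f : Fin (n + 1) → M)
    (p : Fin (n + 1)) :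
    f p * ∏ m : Fin n, f (swap 0 p m.succ) = ∏ m, f m := by
  rw [← Equiv.prod_comp (swap 0 p) f, Fin.prod_univ_succ, swap_apply_left]

theorem prod_inv_sum_Ici_decomposeFin_symm {K : Type*} [Semifield K] {n : ℕ} (a : Fin (n + 1) → K)
    (p : Fin (n + 1)) (e : Perm (Fin n)) :
    ∏ m, (∑ j ∈ Ici m, a (Perm.decomposeFin.symm (p, e) j))⁻¹ =
      (∑ j, a j)⁻¹ * ∏ m, (∑ j ∈ Ici m, a (swap 0 p (e j).succ))⁻¹ := by
  rw [Fin.prod_univ_succ, show Ici (0 : Fin (n + 1)) = univ from Ici_bot, Equiv.sum_comp]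
  congr 1
  refine prod_congr rfl fun m _ => ?_
  rw [← Fin.map_succEmb_Ici, sum_map]
  simp only [Fin.coe_succEmb, Perm.decomposeFin_symm_apply_succ]

theorem sum_perm_prod_inv_sum_Ici {K : Type*} [Field K] [LinearOrder K] [IsStrictOrderedRing K]
    {n : ℕ} (a : Fin n → K) (ha : ∀ i, 0 < a i) :
    ∑ π : Perm (Fin n), ∏ m, (∑ j ∈ Ici m, a (π j))⁻¹ = ∏ m, (a m)⁻¹ := by
  induction n with
  | zero => simp
  | succ n ih =>
    have hS : ∑ j, a j ≠ 0 := (sum_pos (fun i _ => ha i) univ_nonempty).ne'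
    have hrest (p : Fin (n + 1)) :
        ∏ m : Fin n, (a (swap 0 p m.succ))⁻¹ = a p * ∏ m, (a m)⁻¹ := by
      rw [← Fin.mul_prod_comp_swap_zero_succ (fun i => (a i)⁻¹) p, mul_inv_cancel_left₀ (ha p).ne']
    calc ∑ π : Perm (Fin (n + 1)), ∏ m, (∑ j ∈ Ici m, a (π j))⁻¹
        = ∑ p, ∑ e : Perm (Fin n), ∏ m, (∑ j ∈ Ici m, a (Perm.decomposeFin.symm (p, e) j))⁻¹ := by
          rw [← Perm.decomposeFin.symm.sum_comp, Fintype.sum_prod_type]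
      _ = ∑ p, (∑ j, a j)⁻¹ * (a p * ∏ m, (a m)⁻¹) := by
          refine sum_congr rfl fun p _ => ?_
          simp only [prod_inv_sum_Ici_decomposeFin_symm, ← mul_sum]
          rw [ih (fun j => a (swap 0 p j.succ)) fun j => ha _, hrest]
      _ = ∏ m, (a m)⁻¹ := by
          rw [← mul_sum, ← sum_mul, inv_mul_cancel_left₀ hS]

/-- Fröhlich's combinatorial identity: for positive reals `a₁, …, a_n`,
`∑_{π ∈ Perm(Fin n)} ∏_{m=1}^{n} (a_{π(1)} + ⋯ + a_{π(m)})⁻¹ = ∏_{m=1}^{n} a_m⁻¹`. -/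
theorem froehlich_identity (n : ℕ) (a : Fin n → ℝ) (ha : ∀ i, 0 < a i) :
    ∑ π : Equiv.Perm (Fin n), ∏ m : Fin n, (∑ j ∈ Finset.Iic m, a (π j))⁻¹ =
      ∏ m : Fin n, (a m)⁻¹ := by
  calc ∑ π : Perm (Fin n), ∏ m, (∑ j ∈ Iic m, a (π j))⁻¹
      = ∑ π : Perm (Fin n), ∏ m, (∑ j ∈ Ici m, a ((π * Fin.revPerm : Perm (Fin n)) j))⁻¹ := by
        refine sum_congr rfl fun π _ => Fintype.prod_equiv Fin.revPerm _ _ fun m => ?_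
        exact congrArg Inv.inv (Fin.sum_Ici_rev (fun j => a (π j)) m).symm
    _ = ∑ π : Perm (Fin n), ∏ m, (∑ j ∈ Ici m, a (π j))⁻¹ := by
        simpa only [coe_mulRight] using Equiv.sum_comp (Equiv.mulRight Fin.revPerm)
          fun π : Perm (Fin n) => ∏ m, (∑ j ∈ Ici m, a (π j))⁻¹
    _ = ∏ m, (a m)⁻¹ := sum_perm_prod_inv_sum_Ici a ha
end
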